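/- arXiv:1603.05429 — 4 statements merged into one kernel-verified Lean document; each statement's English description precedes it below -/
import Mathlib

section
/- For all positive integers n, k and q with q ≥ ⌈n/k⌉ − 2, Waiter has a strategy in the Client-Waiter game with bias q played on the board E(K_n) guaranteeing that at the end of the game every vertex has degree at most 2k in Client's graph; in other words, S(n,q) ≤ 2k. -/
open Finset

variable {α : Type*}

/-- Auxiliary definition: `fuel` bounds the number of remaining rounds; `C` is the set of
elements claimed by Client so far; `F` is the set of free (unclaimed) elements.
`ClientCanAux q P fuel C F` says that Client can guarantee that his final claimed set
satisfies `P` in the Client-Waiter game with bias `q`: in each round Waiter offers a set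
`O` of at least one and at most `q+1` free elements, Client claims one element of `O`,
and Waiter claims the rest. -/
def ClientCanAux [DecidableEq α] (q : ℕ) (P : Finset α → Prop) :
    ℕ → Finset α → Finset α → Prop
  | 0, C, F => F = ∅ ∧ P C
  | fuel + 1, C, F =>
    if F = ∅ then P C
    else ∀ O ⊆ F, O.Nonempty → O.card ≤ q + 1 →
      ∃ x ∈ O, ClientCanAux q P fuel (insert x C) (F \ O)

/-- Client has a strategy in the Client-Waiter game with bias `q` on the board `X`
guaranteeing that the set of elements he has claimed at the end of the game satisfies `P`. -/
def ClientCanForce [DecidableEq α] (X : Finset α) (q : ℕ) (P : Finset α → Prop) : Prop :=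
  ClientCanAux q P X.card ∅ X

/-- Analogue of `ClientCanAux` for Waiter. -/
def WaiterCanAux [DecidableEq α] (q : ℕ) (P : Finset α → Prop) :
    ℕ → Finset α → Finset α → Prop
  | 0, C, F => F = ∅ ∧ P C
  | fuel + 1, C, F =>
    if F = ∅ then P C
    else ∃ O ⊆ F, O.Nonempty ∧ O.card ≤ q + 1 ∧
      ∀ x ∈ O, WaiterCanAux q P fuel (insert x C) (F \ O)

/-- Waiter has a strategy in the Client-Waiter game with bias `q` on the board `X`
guaranteeing that the set of elements claimed by Client at the end of the game
satisfies `P`. -/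
def WaiterCanForce [DecidableEq α] (X : Finset α) (q : ℕ) (P : Finset α → Prop) : Prop :=
  WaiterCanAux q P X.card ∅ X

/-- Client's graph: the graph whose edges are the edges claimed by Client. -/
def clientGraph {V : Type*} (C : Finset (Sym2 V)) : SimpleGraph V :=
  SimpleGraph.fromEdgeSet (↑C)

/-- The board for games played on `K_n`: the edge set of the complete graph on `n` vertices. -/
def Kboard (n : ℕ) : Finset (Sym2 (Fin n)) :=
  (⊤ : SimpleGraph (Fin n)).edgeFinset

/-- `G` contains a copy of `H`. -/
def ContainsCopy {W V : Type*} (H : SimpleGraph W) (G : SimpleGraph V) : Prop :=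
  ∃ f : W → V, Function.Injective f ∧ ∀ ⦃a b : W⦄, H.Adj a b → G.Adj (f a) (f b)

/-- The 2-density `d₂(H)` of a graph `H`. -/
noncomputable def twoDensity {β : Type*} (H : SimpleGraph β) : ℝ :=
  if 3 ≤ Nat.card β then ((H.edgeSet.ncard : ℝ) - 1) / ((Nat.card β : ℝ) - 2) else 0

/-- The maximum 2-density `m₂(H)` of a graph `H`. -/
noncomputable def maxTwoDensity {β : Type*} (H : SimpleGraph β) : ℝ :=
  sSup {x : ℝ | ∃ H' : H.Subgraph, 3 ≤ H'.verts.ncard ∧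
    x = ((H'.edgeSet.ncard : ℝ) - 1) / ((H'.verts.ncard : ℝ) - 2)}

/-- The maximum density `m(G)` of a graph `G`. -/
noncomputable def maxDensity {β : Type*} (G : SimpleGraph β) : ℝ :=
  sSup {x : ℝ | ∃ G' : G.Subgraph, G'.verts.Nonempty ∧
    x = (G'.edgeSet.ncard : ℝ) / (G'.verts.ncard : ℝ)}

/-- The arboricity `ar(G)` of a graph `G`. -/
noncomputable def arboricity {β : Type*} (G : SimpleGraph β) : ℝ :=
  sSup {x : ℝ | ∃ G' : G.Subgraph, 2 ≤ G'.verts.ncard ∧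
    x = (G'.edgeSet.ncard : ℝ) / ((G'.verts.ncard : ℝ) - 1)}

/-- `H` is strictly 2-balanced: every proper subgraph with at least 3 vertices has
strictly smaller 2-density. -/
def StrictlyTwoBalanced {β : Type*} (H : SimpleGraph β) : Prop :=
  ∀ H' : H.Subgraph, H' ≠ ⊤ → 3 ≤ H'.verts.ncard → twoDensity H'.coe < twoDensity H

open Classical in
/-- The probability that Client has a winning strategy in the `H`-game `CW(G_{n,p}, H, q)`,
where the random graph `G_{n,p}` is generated by keeping each edge of `K_n` independently
with probability `p`. -/
noncomputable def probClientWinsHGame {β : Type*} (H : SimpleGraph β) (q n : ℕ) (p : ℝ) : ℝ :=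
  ∑ E ∈ (Kboard n).powerset,
    p ^ E.card * (1 - p) ^ ((Kboard n).card - E.card) *
      (if ClientCanForce E q (fun C => ContainsCopy H (clientGraph C)) then 1 else 0)

/-- Vertices of the complete `k`-ary rooted tree of height `k`: a vertex at depth `i ≤ k`
is a sequence of `i` choices among `k` children. -/
abbrev TreeVert (k : ℕ) : Type := (i : Fin (k + 1)) × (Fin (i : ℕ) → Fin k)

/-- `u` is a child of `v` in the complete `k`-ary tree. -/
def IsChildOf {k : ℕ} (u v : TreeVert k) : Prop :=
  ∃ h : (u.1 : ℕ) = (v.1 : ℕ) + 1,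
    ∀ t : Fin (v.1 : ℕ), u.2 ⟨t.1, by have := t.2; omega⟩ = v.2 t

/-- The complete `k`-ary tree of height `k`, `T_{k,k}`. -/
def Tkk (k : ℕ) : SimpleGraph (TreeVert k) where
  Adj u v := IsChildOf u v ∨ IsChildOf v u
  symm := ⟨by intro u v h; tauto⟩
  loopless := ⟨by
    intro u h
    rcases h with ⟨h, _⟩ | ⟨h, _⟩ <;> omega⟩

/-!
Split the vertices into at most `k` blocks of at most `q + 2` consecutive vertices and label
each edge by the pair of blocks of its ends. A vertex meets at most `q + 2` edges of each label
and at most `k` labels, so it suffices that Waiter keeps Client's degree within every label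
class at most `2`.

Within one label class Waiter keeps the following invariant: a vertex that still has free edges
has at most one Client edge, and the hot vertices (those with both free and Client edges) are
at most two, one of them with a single free edge. If there is a hot vertex, Waiter offers all
its free edges, at most `q + 1` of them, after which it has no free edges left; otherwise she
offers the free edges at any vertex, keeping one back if there are `q + 2`.
-/

theorem WaiterCanAux.mono [DecidableEq α] {q : ℕ} {P Q : Finset α → Prop}
    (hPQ : ∀ C, P C → Q C) :
    ∀ {fuel : ℕ} {C F : Finset α}, WaiterCanAux q P fuel C F → WaiterCanAux q Q fuel C F
  | 0, C, _, h => ⟨h.1, hPQ C h.2⟩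
  | _ + 1, C, F, h => by
    rw [WaiterCanAux] at h ⊢
    split_ifs at h ⊢
    · exact hPQ C h
    · obtain ⟨O, hOF, hO, hOq, hnext⟩ := h
      exact ⟨O, hOF, hO, hOq, fun x hx => WaiterCanAux.mono hPQ (hnext x hx)⟩

theorem WaiterCanForce.mono [DecidableEq α] {X : Finset α} {q : ℕ} {P Q : Finset α → Prop}
    (h : WaiterCanForce X q P) (hPQ : ∀ C, P C → Q C) : WaiterCanForce X q Q :=
  WaiterCanAux.mono hPQ h

theorem WaiterCanForce.of_invariant [DecidableEq α] {X : Finset α} {q : ℕ}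
    {P : Finset α → Prop} (I : Finset α → Finset α → Prop) (init : I ∅ X)
    (step : ∀ C F, I C F → F.Nonempty →
      ∃ O ⊆ F, O.Nonempty ∧ #O ≤ q + 1 ∧ ∀ x ∈ O, I (insert x C) (F \ O))
    (final : ∀ C, I C ∅ → P C) :
    WaiterCanForce X q P := by
  suffices h : ∀ fuel C F, #F ≤ fuel → I C F → WaiterCanAux q P fuel C F from
    h _ ∅ X le_rfl init
  intro fuel
  induction fuel with
  | zero =>
    intro C F hF hI
    obtain rfl : F = ∅ := card_eq_zero.mp (Nat.le_zero.mp hF)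
    exact ⟨rfl, final C hI⟩
  | succ fuel ih =>
    intro C F hF hI
    rw [WaiterCanAux]
    split_ifs with hF₀
    · exact final C (hF₀ ▸ hI)
    · obtain ⟨O, hOF, hO, hOq, hnext⟩ := step C F hI (nonempty_iff_ne_empty.mpr hF₀)
      refine ⟨O, hOF, hO, hOq, fun x hx => ih _ _ ?_ (hnext x hx)⟩
      have := hO.card_pos
      rw [card_sdiff_of_subset hOF]
      omega

section DegreeGame

variable {V : Type*} [DecidableEq V] {q : ℕ} {A C F O : Finset (Sym2 V)} {x : Sym2 V} {v : V}

def edgeDeg (A : Finset (Sym2 V)) (v : V) : ℕ := #{e ∈ A | v ∈ e}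

theorem edgeDeg_empty (v : V) : edgeDeg ∅ v = 0 := by
  simp [edgeDeg]

theorem edgeDeg_mono {B : Finset (Sym2 V)} (h : A ⊆ B) (v : V) : edgeDeg A v ≤ edgeDeg B v :=
  card_le_card (filter_subset_filter _ h)

theorem edgeDeg_pos_of_mem (hx : x ∈ A) (hv : v ∈ x) : 0 < edgeDeg A v :=
  card_pos.mpr ⟨x, mem_filter.mpr ⟨hx, hv⟩⟩

theorem edgeDeg_insert_le (A : Finset (Sym2 V)) (x : Sym2 V) (v : V) :
    edgeDeg (insert x A) v ≤ edgeDeg A v + 1 := by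
  unfold edgeDeg
  rw [filter_insert]
  split_ifs
  exacts [card_insert_le _ _, Nat.le_succ _]

theorem edgeDeg_insert_of_notMem (hv : v ∉ x) : edgeDeg (insert x A) v = edgeDeg A v := by
  unfold edgeDeg
  rw [filter_insert, if_neg hv]

theorem edgeDeg_sdiff_lt (hxO : x ∈ O) (hxF : x ∈ F) (hv : v ∈ x) :
    edgeDeg (F \ O) v < edgeDeg F v :=
  card_lt_card <| (ssubset_iff_of_subset (filter_subset_filter _ sdiff_subset)).mpr
    ⟨x, mem_filter.mpr ⟨hxF, hv⟩, fun h => (mem_sdiff.mp (mem_filter.mp h).1).2 hxO⟩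

theorem edgeDeg_sdiff_filter_mem_self (F : Finset (Sym2 V)) (v : V) :
    edgeDeg (F \ {e ∈ F | v ∈ e}) v = 0 := by
  rw [edgeDeg, card_eq_zero, filter_eq_empty_iff]
  intro e he hv
  exact (mem_sdiff.mp he).2 (mem_filter.mpr ⟨(mem_sdiff.mp he).1, hv⟩)

theorem edgeDeg_insert_add_edgeDeg_sdiff_le (hxO : x ∈ O) (hOF : O ⊆ F) (v : V) :
    edgeDeg (insert x C) v + edgeDeg (F \ O) v ≤ edgeDeg C v + edgeDeg F v := by
  by_cases hv : v ∈ x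
  · have := edgeDeg_insert_le C x v
    have := edgeDeg_sdiff_lt hxO (hOF hxO) hv
    omega
  · rw [edgeDeg_insert_of_notMem hv]
    have := edgeDeg_mono (sdiff_subset : F \ O ⊆ F) v
    omega

def IsHot (C F : Finset (Sym2 V)) (v : V) : Prop := 0 < edgeDeg F v ∧ 0 < edgeDeg C v

theorem IsHot.of_insert_sdiff (h : IsHot (insert x C) (F \ O) v) : v ∈ x ∨ IsHot C F v := by
  by_cases hv : v ∈ x
  · exact Or.inl hv
  · rw [IsHot, edgeDeg_insert_of_notMem hv] at h
    exact Or.inr ⟨h.1.trans_le (edgeDeg_mono sdiff_subset v), h.2⟩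

structure DegreeInv (q : ℕ) (C F : Finset (Sym2 V)) : Prop where
  edgeDeg_add_le : ∀ v, edgeDeg C v + edgeDeg F v ≤ q + 2
  edgeDeg_le_two : ∀ v, edgeDeg C v ≤ 2
  edgeDeg_le_one : ∀ v, 0 < edgeDeg F v → edgeDeg C v ≤ 1
  -- guarded by a hot `u` so that the invariant holds trivially for an empty vertex type
  hot : ∀ u, IsHot C F u → ∃ y z, ∀ v, IsHot C F v → v = y ∨ (v = z ∧ edgeDeg F v = 1)

namespace DegreeInv

theorem empty (h : ∀ v, edgeDeg F v ≤ q + 2) : DegreeInv q ∅ F where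
  edgeDeg_add_le v := by simpa [edgeDeg_empty] using h v
  edgeDeg_le_two v := by simp [edgeDeg_empty]
  edgeDeg_le_one v _ := by simp [edgeDeg_empty]
  hot u hu := absurd hu.2 (by simp [edgeDeg_empty])

theorem exists_pivot (hI : DegreeInv q C F) {u : V} (hu : IsHot C F u) :
    ∃ y z, IsHot C F y ∧ ∀ v, IsHot C F v → v = y ∨ (v = z ∧ edgeDeg F v = 1) := by
  obtain ⟨y, z, h⟩ := hI.hot u hu
  by_cases hy : IsHot C F y
  · exact ⟨y, z, hy, h⟩
  · have hz : IsHot C F z := by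
      rcases h u hu with rfl | ⟨rfl, -⟩
      exacts [absurd hu hy, hu]
    refine ⟨z, z, hz, fun v hv => Or.inl ?_⟩
    rcases h v hv with rfl | ⟨rfl, -⟩
    exacts [absurd hv hy, rfl]

/-- After Waiter offers `O` and Client picks `x`, only the ends of `x` need checking. -/
theorem insert_sdiff (hI : DegreeInv q C F) (hxO : x ∈ O) (hOF : O ⊆ F)
    (one : ∀ v ∈ x, 0 < edgeDeg (F \ O) v → edgeDeg C v = 0)
    (hot : ∀ u, IsHot (insert x C) (F \ O) u → ∃ y z, ∀ v, IsHot (insert x C) (F \ O) v →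
      v = y ∨ (v = z ∧ edgeDeg (F \ O) v = 1)) :
    DegreeInv q (insert x C) (F \ O) where
  edgeDeg_add_le v := (edgeDeg_insert_add_edgeDeg_sdiff_le hxO hOF v).trans (hI.edgeDeg_add_le v)
  edgeDeg_le_two v := by
    by_cases hv : v ∈ x
    · have := edgeDeg_insert_le C x v
      have := hI.edgeDeg_le_one v (edgeDeg_pos_of_mem (hOF hxO) hv)
      omega
    · rw [edgeDeg_insert_of_notMem hv]
      exact hI.edgeDeg_le_two v
  edgeDeg_le_one v hv := by
    by_cases hvx : v ∈ x
    · have := edgeDeg_insert_le C x v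
      have := one v hvx hv
      omega
    · rw [edgeDeg_insert_of_notMem hvx]
      exact hI.edgeDeg_le_one v (hv.trans_le (edgeDeg_mono sdiff_subset v))
  hot := hot

theorem exists_offer_of_isHot (hI : DegreeInv q C F) {y z : V} (hy : IsHot C F y)
    (hyz : ∀ v, IsHot C F v → v = y ∨ (v = z ∧ edgeDeg F v = 1)) :
    ∃ O ⊆ F, O.Nonempty ∧ #O ≤ q + 1 ∧ ∀ x ∈ O, DegreeInv q (insert x C) (F \ O) := by
  refine ⟨{e ∈ F | y ∈ e}, filter_subset _ _, card_pos.mp hy.1, ?_, fun x hxO => ?_⟩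
  · have := hI.edgeDeg_add_le y
    have := hy.2
    change edgeDeg F y ≤ q + 1
    omega
  obtain ⟨hxF, hyx⟩ := mem_filter.mp hxO
  obtain ⟨b, rfl⟩ := Sym2.mem_iff_exists.mp hyx
  have hy₀ := edgeDeg_sdiff_filter_mem_self F y
  refine hI.insert_sdiff hxO (filter_subset _ _) (fun v hv hvF => ?_)
    (fun _ _ => ⟨b, z, fun v hv => ?_⟩)
  · by_contra hC
    rcases hyz v ⟨edgeDeg_pos_of_mem hxF hv, Nat.pos_of_ne_zero hC⟩ with rfl | ⟨-, h₁⟩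
    · omega
    · have := edgeDeg_sdiff_lt hxO hxF hv
      omega
  · have hvy : v ≠ y := by
      rintro rfl
      exact hv.1.ne' hy₀
    rcases hv.of_insert_sdiff with hvx | hvold
    · exact Or.inl ((Sym2.mem_iff.mp hvx).resolve_left hvy)
    · rcases hyz v hvold with h | ⟨rfl, h₁⟩
      · exact absurd h hvy
      · have := edgeDeg_mono (sdiff_subset : F \ {e ∈ F | y ∈ e} ⊆ F) v
        have := hv.1
        exact Or.inr ⟨rfl, by omega⟩

theorem exists_offer_of_forall_not_isHot (hI : DegreeInv q C F) (hcold : ∀ v, ¬IsHot C F v)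
    {e₀ : Sym2 V} (he₀ : e₀ ∈ F) :
    ∃ O ⊆ F, O.Nonempty ∧ #O ≤ q + 1 ∧ ∀ x ∈ O, DegreeInv q (insert x C) (F \ O) := by
  obtain ⟨a, ha⟩ : ∃ a, a ∈ e₀ := ⟨_, Sym2.out_fst_mem e₀⟩
  set S := {e ∈ F | a ∈ e} with hS
  have he₀S : e₀ ∈ S := mem_filter.mpr ⟨he₀, ha⟩
  have hSq : #S ≤ q + 2 := (Nat.le_add_left _ _).trans (hI.edgeDeg_add_le a)
  obtain ⟨O, hOS, hO, hOq, hSO⟩ : ∃ O ⊆ S, O.Nonempty ∧ #O ≤ q + 1 ∧ #S ≤ #O + 1 := by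
    by_cases hS' : #S ≤ q + 1
    · exact ⟨S, subset_rfl, ⟨e₀, he₀S⟩, hS', by omega⟩
    · have := card_erase_of_mem he₀S
      exact ⟨S.erase e₀, erase_subset _ _, card_pos.mp (by omega), by omega, by omega⟩
  have hOF : O ⊆ F := hOS.trans (filter_subset _ _)
  refine ⟨O, hOF, hO, hOq, fun x hxO => ?_⟩
  have hxF := hOF hxO
  obtain ⟨b, rfl⟩ := Sym2.mem_iff_exists.mp (mem_filter.mp (hOS hxO)).2
  have ha₁ : edgeDeg (F \ O) a ≤ 1 := by
    have hsub : {e ∈ F \ O | a ∈ e} ⊆ S \ O := fun e he => by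
      simp only [hS, mem_filter, mem_sdiff] at he ⊢
      tauto
    have := card_le_card hsub
    rw [card_sdiff_of_subset hOS] at this
    exact this.trans (by omega)
  refine hI.insert_sdiff hxO hOF (fun v hv _ => ?_) (fun _ _ => ⟨b, a, fun v hv => ?_⟩)
  · by_contra hC
    exact hcold v ⟨edgeDeg_pos_of_mem hxF hv, Nat.pos_of_ne_zero hC⟩
  · rcases hv.of_insert_sdiff with hvx | hvold
    · rcases Sym2.mem_iff.mp hvx with rfl | rfl
      · exact Or.inr ⟨rfl, by have := hv.1; omega⟩
      · exact Or.inl rfl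
    · exact absurd hvold (hcold v)

theorem exists_offer (hI : DegreeInv q C F) (hF : F.Nonempty) :
    ∃ O ⊆ F, O.Nonempty ∧ #O ≤ q + 1 ∧ ∀ x ∈ O, DegreeInv q (insert x C) (F \ O) := by
  by_cases h : ∃ u, IsHot C F u
  · obtain ⟨u, hu⟩ := h
    obtain ⟨y, z, hy, hyz⟩ := hI.exists_pivot hu
    exact hI.exists_offer_of_isHot hy hyz
  · obtain ⟨e₀, he₀⟩ := hF
    exact hI.exists_offer_of_forall_not_isHot (not_exists.mp h) he₀

end DegreeInv

variable {L : Type*} [DecidableEq L]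

def LabelDegreeInv (q : ℕ) (ℓ : Sym2 V → L) (C F : Finset (Sym2 V)) : Prop :=
  ∀ p, DegreeInv q {e ∈ C | ℓ e = p} {e ∈ F | ℓ e = p}

theorem LabelDegreeInv.exists_offer {ℓ : Sym2 V → L} (hI : LabelDegreeInv q ℓ C F)
    (hF : F.Nonempty) :
    ∃ O ⊆ F, O.Nonempty ∧ #O ≤ q + 1 ∧ ∀ x ∈ O, LabelDegreeInv q ℓ (insert x C) (F \ O) := by
  obtain ⟨e₀, he₀⟩ := hF
  obtain ⟨O, hOF, hO, hOq, hnext⟩ :=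
    (hI (ℓ e₀)).exists_offer ⟨e₀, mem_filter.mpr ⟨he₀, rfl⟩⟩
  refine ⟨O, hOF.trans (filter_subset _ _), hO, hOq, fun x hxO r => ?_⟩
  have hOℓ : ∀ e ∈ O, ℓ e = ℓ e₀ := fun e he => (mem_filter.mp (hOF he)).2
  have hsdiff : {e ∈ F \ O | ℓ e = r} = {e ∈ F | ℓ e = r} \ O := by
    ext e
    simp only [mem_filter, mem_sdiff]
    tauto
  rw [filter_insert, hsdiff]
  by_cases hr : ℓ e₀ = r
  · subst hr
    rw [if_pos (hOℓ x hxO)]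
    exact hnext x hxO
  · rw [if_neg fun h => hr ((hOℓ x hxO).symm.trans h), sdiff_eq_self_of_disjoint
      (disjoint_left.mpr fun e he heO => hr ((hOℓ e heO).symm.trans (mem_filter.mp he).2))]
    exact hI r

theorem waiterCanForce_edgeDeg_filter_le_two (X : Finset (Sym2 V)) (ℓ : Sym2 V → L)
    (hX : ∀ v p, edgeDeg {e ∈ X | ℓ e = p} v ≤ q + 2) :
    WaiterCanForce X q (fun C => ∀ v p, edgeDeg {e ∈ C | ℓ e = p} v ≤ 2) :=
  WaiterCanForce.of_invariant (LabelDegreeInv q ℓ)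
    (fun p => by rw [filter_empty]; exact DegreeInv.empty (hX · p))
    (fun _ _ hI hF => hI.exists_offer hF)
    (fun _ hI v p => (hI p).edgeDeg_le_two v)

end DegreeGame

section Blocks

variable {V ι : Type*} [DecidableEq V] [DecidableEq ι]

theorem edgeDeg_filter_map_le [Fintype V] (g : V → ι) {s : ℕ} (hg : ∀ j, #{w | g w = j} ≤ s)
    (A : Finset (Sym2 V)) (v : V) (p : Sym2 ι) : edgeDeg {e ∈ A | Sym2.map g e = p} v ≤ s := by
  by_cases hv : g v ∈ p
  · obtain ⟨j, rfl⟩ := Sym2.mem_iff_exists.mp hv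
    refine (card_le_card fun e he => ?_).trans
      ((card_image_le (f := fun w => s(v, w))).trans (hg j))
    simp only [mem_filter] at he
    obtain ⟨⟨-, hmap⟩, hve⟩ := he
    obtain ⟨w, rfl⟩ := Sym2.mem_iff_exists.mp hve
    rw [Sym2.map_mk] at hmap
    exact mem_image.mpr ⟨w, mem_filter.mpr ⟨mem_univ _, Sym2.congr_right.mp hmap⟩, rfl⟩
  · rw [edgeDeg, card_eq_zero.mpr (filter_eq_empty_iff.mpr fun e he hve => ?_)]
    · exact Nat.zero_le _
    · exact hv ((mem_filter.mp he).2 ▸ Sym2.mem_map.mpr ⟨v, hve, rfl⟩)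

theorem edgeDeg_le_sum_edgeDeg_filter_map (g : V → ι) {J : Finset ι} (hJ : ∀ w, g w ∈ J)
    (C : Finset (Sym2 V)) (v : V) :
    edgeDeg C v ≤ ∑ j ∈ J, edgeDeg {e ∈ C | Sym2.map g e = s(g v, j)} v := by
  refine (card_le_card fun e he => ?_).trans card_biUnion_le
  obtain ⟨hC, hve⟩ := mem_filter.mp he
  obtain ⟨w, rfl⟩ := Sym2.mem_iff_exists.mp hve
  exact mem_biUnion.mpr ⟨g w, hJ w, mem_filter.mpr ⟨mem_filter.mpr ⟨hC, Sym2.map_mk g v w⟩, hve⟩⟩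

end Blocks

theorem ncard_neighborSet_clientGraph_le {V : Type*} [DecidableEq V] (C : Finset (Sym2 V))
    (v : V) : ((clientGraph C).neighborSet v).ncard ≤ edgeDeg C v := by
  rw [edgeDeg, ← Set.ncard_coe_finset]
  refine Set.ncard_le_ncard_of_injOn (fun w => s(v, w)) (fun w hw => ?_)
    (fun _ _ _ _ h => Sym2.congr_right.mp h) (finite_toSet _)
  rw [SimpleGraph.mem_neighborSet, clientGraph, SimpleGraph.fromEdgeSet_adj] at hw
  exact mem_filter.mpr ⟨hw.1, Sym2.mem_mk_left v w⟩

theorem card_filter_val_div_eq_le (n : ℕ) {d : ℕ} (hd : 0 < d) (j : ℕ) :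
    #{w : Fin n | w.val / d = j} ≤ d := by
  refine (card_le_card_of_injOn Fin.val (t := Ico (j * d) (j * d + d)) (fun w hw => ?_)
    Fin.val_injective.injOn).trans (by simp)
  have := (Nat.div_eq_iff hd).mp (mem_filter.mp hw).2
  exact mem_Ico.mpr ⟨this.1, by omega⟩

theorem le_mul_of_ceil_div_le {n k : ℕ} {m : ℤ} (hk : 0 < k) (h : ⌈(n : ℚ) / k⌉ ≤ m) :
    (n : ℤ) ≤ k * m := by
  have := Int.ceil_le.mp h
  rw [div_le_iff₀ (by exact_mod_cast hk)] at this
  exact_mod_cast (by linarith : (n : ℚ) ≤ k * m)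

theorem stmt0_general (n k q : ℕ) (hk : 0 < k)
    (h : (⌈(n : ℚ) / (k : ℚ)⌉ - 2 : ℤ) ≤ (q : ℤ)) :
    WaiterCanForce (Kboard n) q
      (fun C => ∀ v : Fin n, ((clientGraph C).neighborSet v).ncard ≤ 2 * k) := by
  have hnk : (n : ℤ) ≤ k * (q + 2) := le_mul_of_ceil_div_le hk (by omega)
  set g : Fin n → ℕ := fun w => w.val / (q + 2)
  have hg : ∀ w, g w ∈ range k := fun w =>
    mem_range.mpr ((Nat.div_lt_iff_lt_mul (by omega)).mpr (by have := w.2; nlinarith))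
  refine (waiterCanForce_edgeDeg_filter_le_two (Kboard n) (Sym2.map g) fun v p =>
    edgeDeg_filter_map_le g (card_filter_val_div_eq_le n (by omega)) _ v p).mono fun C hC v => ?_
  calc ((clientGraph C).neighborSet v).ncard ≤ edgeDeg C v := ncard_neighborSet_clientGraph_le C v
    _ ≤ ∑ j ∈ range k, edgeDeg {e ∈ C | Sym2.map g e = s(g v, j)} v :=
      edgeDeg_le_sum_edgeDeg_filter_map g hg C v
    _ ≤ ∑ _j ∈ range k, 2 := sum_le_sum fun j _ => hC v _
    _ = 2 * k := by simp [mul_comm]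

/-- Proposition 1 (upper bound): if `q ≥ ⌈n/k⌉ - 2` then `S(n,q) ≤ 2k`: Waiter can ensure
that every vertex of Client's final graph has degree at most `2k`. -/
theorem stmt0 (n k q : ℕ) (hn : 0 < n) (hk : 0 < k) (hq : 0 < q)
    (h : (⌈(n : ℚ) / (k : ℚ)⌉ - 2 : ℤ) ≤ (q : ℤ)) :
    WaiterCanForce (Kboard n) q
      (fun C => ∀ v : Fin n, ((clientGraph C).neighborSet v).ncard ≤ 2 * k) :=
  stmt0_general n k q hk h
end

section
/- For all positive integers n, k and q with k ≥ 2 and q < (n−1)/(k−1) − 1, Client has a strategy in the Client-Waiter game with bias q played on the board E(K_n) guaranteeing that at the end of the game his graph contains a vertex of degree at least k; in other words, S(n,q) ≥ k. -/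
open Finset

variable {α : Type*}

/-!
In every round Client claims one element while at most `q + 1` elements leave the board, so
whatever Waiter does Client ends with at least `|E(K_n)| / (q + 1) = n (n - 1) / (2 (q + 1))`
edges. The bias condition makes this more than `n (k - 1) / 2`, and then the handshake lemma
gives a vertex of degree at least `k`.
-/

section ClientCount

variable [DecidableEq α]

/-- Any choices of Client will do: every round adds one element to `C` and removes at most
`q + 1` from `F`. -/
theorem clientCanAux_of_forall_card_le (q : ℕ) (P : Finset α → Prop) (fuel : ℕ) :
    ∀ C F : Finset α, #F ≤ fuel → Disjoint C F →
      (∀ S, C ⊆ S → S ⊆ C ∪ F → #F + (q + 1) * #C ≤ (q + 1) * #S → P S) →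
      ClientCanAux q P fuel C F := by
  induction fuel with
  | zero =>
    intro C F hF_card _ hP
    have hF : F = ∅ := card_eq_zero.mp (Nat.le_zero.mp hF_card)
    exact ⟨hF, hP C subset_rfl (by simp) (by simp [hF])⟩
  | succ fuel ih =>
    intro C F hF hCF hP
    rw [ClientCanAux]
    split_ifs with hF_empty
    · exact hP C subset_rfl (by simp) (by simp [hF_empty])
    intro O hOF ⟨x, hx⟩ hO
    have hxC : x ∉ C := disjoint_right.mp hCF (hOF hx)
    have hO_pos : 0 < #O := card_pos.mpr ⟨x, hx⟩
    have hcard_sdiff : #(F \ O) = #F - #O := card_sdiff_of_subset hOF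
    have hO_le : #O ≤ #F := card_le_card hOF
    refine ⟨x, hx, ih _ _ (by omega) ?_ fun S hCS hSCF hS => hP S ?_ ?_ ?_⟩
    · exact disjoint_insert_left.mpr ⟨fun h => (mem_sdiff.mp h).2 hx, hCF.mono_right sdiff_subset⟩
    · exact (subset_insert x C).trans hCS
    · refine hSCF.trans fun a ha => ?_
      simp only [mem_union, mem_insert, mem_sdiff] at ha ⊢
      rcases ha with (rfl | ha) | ha
      · exact Or.inr (hOF hx)
      · exact Or.inl ha
      · exact Or.inr ha.1
    · rw [card_insert_of_notMem hxC, hcard_sdiff, mul_add_one] at hS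
      omega

theorem ClientCanForce.of_forall_card_le {X : Finset α} {q : ℕ} {P : Finset α → Prop}
    (h : ∀ S ⊆ X, #X ≤ (q + 1) * #S → P S) : ClientCanForce X q P :=
  clientCanAux_of_forall_card_le q P _ ∅ X le_rfl (disjoint_empty_left X)
    fun S _ hSX hS => h S (by simpa using hSX) (by simpa using hS)

end ClientCount

theorem SimpleGraph.exists_lt_degree_of_card_mul_lt {V : Type*} [Fintype V]
    (G : SimpleGraph V) [DecidableRel G.Adj] {d : ℕ}
    (h : Fintype.card V * d < 2 * #G.edgeFinset) : ∃ v, d < G.degree v := by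
  by_contra! hd
  have := sum_le_card_nsmul univ (G.degree ·) d fun v _ => hd v
  rw [G.sum_degrees_eq_twice_card_edges, card_univ, smul_eq_mul] at this
  omega

theorem edgeSet_clientGraph {V : Type*} {S : Finset (Sym2 V)} (hS : ∀ e ∈ S, ¬e.IsDiag) :
    (clientGraph S).edgeSet = S := by
  rw [clientGraph, SimpleGraph.edgeSet_fromEdgeSet, sdiff_eq_left, Set.disjoint_left]
  exact hS

theorem exists_lt_ncard_neighborSet_clientGraph {V : Type*} [Fintype V] {S : Finset (Sym2 V)}
    (hS : ∀ e ∈ S, ¬e.IsDiag) {d : ℕ} (h : Fintype.card V * d < 2 * #S) :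
    ∃ v, d < ((clientGraph S).neighborSet v).ncard := by
  classical
  have hedges : (clientGraph S).edgeFinset = S := by
    ext e
    simp [edgeSet_clientGraph hS]
  obtain ⟨v, hv⟩ := (clientGraph S).exists_lt_degree_of_card_mul_lt (hedges ▸ h)
  exact ⟨v, by rwa [Set.ncard_eq_toFinset_card']⟩

theorem mem_Kboard {n : ℕ} {e : Sym2 (Fin n)} : e ∈ Kboard n ↔ ¬e.IsDiag := by
  simp [Kboard]

theorem two_mul_card_Kboard (n : ℕ) : 2 * #(Kboard n) = n * (n - 1) := by
  rw [Kboard, SimpleGraph.card_edgeFinset_top_eq_card_choose_two, Fintype.card_fin,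
    Nat.choose_two_right, Nat.mul_div_cancel' (Nat.even_mul_pred_self n).two_dvd]

theorem add_one_mul_sub_one_lt_of_lt_div_sub_one {n k q : ℕ} (hk : 2 ≤ k)
    (h : (q : ℝ) < ((n : ℝ) - 1) / ((k : ℝ) - 1) - 1) : (q + 1) * (k - 1) < n - 1 := by
  have hk' : (0 : ℝ) < (k : ℝ) - 1 := by
    have : (2 : ℝ) ≤ k := by exact_mod_cast hk
    linarith
  have hreal : ((q : ℝ) + 1) * ((k : ℝ) - 1) < (n : ℝ) - 1 :=
    (lt_div_iff₀ hk').mp (by linarith)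
  have : (((q + 1) * (k - 1) + 1 : ℕ) : ℝ) < n := by
    push_cast [Nat.cast_sub (by omega : 1 ≤ k)]
    linarith
  have := Nat.cast_lt.mp this
  omega

theorem stmt1_general (n k q : ℕ) (hk : 2 ≤ k)
    (h : (q : ℝ) < ((n : ℝ) - 1) / ((k : ℝ) - 1) - 1) :
    ClientCanForce (Kboard n) q
      (fun C => ∃ v : Fin n, k ≤ ((clientGraph C).neighborSet v).ncard) := by
  have hbias := add_one_mul_sub_one_lt_of_lt_div_sub_one hk h
  refine ClientCanForce.of_forall_card_le fun S hSX hS => ?_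
  have hS_edges : n * (k - 1) < 2 * #S := by
    refine Nat.lt_of_mul_lt_mul_left (a := q + 1) ?_
    calc (q + 1) * (n * (k - 1)) = n * ((q + 1) * (k - 1)) := by ring
      _ < n * (n - 1) := Nat.mul_lt_mul_of_pos_left hbias (by omega)
      _ = 2 * #(Kboard n) := (two_mul_card_Kboard n).symm
      _ ≤ 2 * ((q + 1) * #S) := Nat.mul_le_mul_left 2 hS
      _ = (q + 1) * (2 * #S) := by ring
  obtain ⟨v, hv⟩ := exists_lt_ncard_neighborSet_clientGraph
    (fun e he => mem_Kboard.mp (hSX he)) (d := k - 1) (by simpa using hS_edges)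
  exact ⟨v, by omega⟩

/-- Proposition 1 (lower bound): if `k ≥ 2` and `q < (n-1)/(k-1) - 1` then `S(n,q) ≥ k`:
Client can ensure that his final graph has a vertex of degree at least `k`. -/
theorem stmt1 (n k q : ℕ) (hn : 0 < n) (hk : 2 ≤ k) (hq : 0 < q)
    (h : (q : ℝ) < ((n : ℝ) - 1) / ((k : ℝ) - 1) - 1) :
    ClientCanForce (Kboard n) q
      (fun C => ∃ v : Fin n, k ≤ ((clientGraph C).neighborSet v).ncard) :=
  stmt1_general n k q hk h
end

section
/- For all integers n ≥ 1 and c ≥ 2, if q = c·n then P(n,q) < 2·log₂(log_{2c/3}(q)) + 1, i.e., Waiter has a strategy in the Client-Waiter game with bias q = c·n played on the board E(K_n) guaranteeing that Client's final graph contains no path with at least 2·log₂(log_{2c/3}(q)) + 1 edges. -/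
open Finset

variable {α : Type*}

/-!
Waiter plays in phases `k = 0, 1, …`. During phase `k` the live vertices `A ∪ B` lie in pairwise
distinct components of Client's graph and every free edge joins two live vertices; paths of
Client's graph end at a vertex of `A` after at most `k` edges and at a vertex of `B` after at most
`k + 1`. Waiter offers all free edges at a largest set `S ⊆ A` at which there are at most `q + 1`
of them. Whatever Client claims, the vertices of `S` die, since no free edge meets them any more,
and the other end `w` of Client's edge joins `B`. So paths have length at most `2k + 2`, and at
most `2k + 1` while `B` is empty. When no free edge meets `A`, phase `k + 1` starts with `B` in
the role of `A`.

A vertex `w` that is new in `B` comes from `A \ S`, so `S ∪ {w}` overflows and at least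
`q + 3 - n ≥ (q + 1) / 2` edges were offered (as `q ≥ 2n`). Hence `(q + 1) |B| + 2 |F|` never
increases, and if `m` live vertices start a phase, then at most `m² / (q + 1)` start the next. So
`m_k (q + 1) ^ (2 ^ k - 1) ≤ n ^ (2 ^ k)`, which for `q = c n` forces
`k < log₂ (log_{2c/3} (c n))`.
-/

theorem waiterCanAux_of_invariant {β : Type*} [DecidableEq β] {q : ℕ} {P : Finset β → Prop}
    (I : Finset β → Finset β → Prop)
    (hstep : ∀ C F, I C F → F.Nonempty →
      ∃ O ⊆ F, O.Nonempty ∧ #O ≤ q + 1 ∧ ∀ x ∈ O, I (insert x C) (F \ O))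
    (hfin : ∀ C, I C ∅ → P C) :
    ∀ fuel C F, #F ≤ fuel → I C F → WaiterCanAux q P fuel C F := by
  intro fuel
  induction fuel with
  | zero =>
    intro C F hF hI
    obtain rfl := card_eq_zero.1 (Nat.le_zero.1 hF)
    exact ⟨rfl, hfin C hI⟩
  | succ fuel ih =>
    intro C F hF hI
    rw [WaiterCanAux]
    split_ifs with hF₀
    · exact hfin C (hF₀ ▸ hI)
    · obtain ⟨O, hOF, hO, hOq, hnext⟩ := hstep C F hI (nonempty_iff_ne_empty.2 hF₀)
      refine ⟨O, hOF, hO, hOq, fun x hx => ih _ _ ?_ (hnext x hx)⟩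
      have := card_lt_card (sdiff_ssubset hOF hO)
      omega

theorem waiterCanForce_of_invariant {β : Type*} [DecidableEq β] {X : Finset β} {q : ℕ}
    {P : Finset β → Prop} (I : Finset β → Finset β → Prop) (h₀ : I ∅ X)
    (hstep : ∀ C F, I C F → F.Nonempty →
      ∃ O ⊆ F, O.Nonempty ∧ #O ≤ q + 1 ∧ ∀ x ∈ O, I (insert x C) (F \ O))
    (hfin : ∀ C, I C ∅ → P C) : WaiterCanForce X q P :=
  waiterCanAux_of_invariant I hstep hfin _ _ _ le_rfl h₀

namespace SimpleGraph

variable {V : Type*} {G : SimpleGraph V}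

def PathLengthLE (G : SimpleGraph V) (t : ℕ) : Prop :=
  ∀ ⦃a b : V⦄ (p : G.Walk a b), p.IsPath → p.length ≤ t

def PathLengthToLE (G : SimpleGraph V) (v : V) (t : ℕ) : Prop :=
  ∀ ⦃a : V⦄ (p : G.Walk a v), p.IsPath → p.length ≤ t

lemma PathLengthLE.mono {s t : ℕ} (h : G.PathLengthLE s) (hst : s ≤ t) : G.PathLengthLE t :=
  fun _ _ p hp => (h p hp).trans hst

lemma PathLengthToLE.mono {v : V} {s t : ℕ} (h : G.PathLengthToLE v s) (hst : s ≤ t) :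
    G.PathLengthToLE v t :=
  fun _ p hp => (h p hp).trans hst

lemma Walk.length_eq_zero_of_bot {a b : V} (p : (⊥ : SimpleGraph V).Walk a b) : p.length = 0 := by
  cases p with
  | nil => rfl
  | cons h _ => exact h.elim

lemma pathLengthLE_bot (t : ℕ) : (⊥ : SimpleGraph V).PathLengthLE t := by
  intro _ _ p _
  simp [p.length_eq_zero_of_bot]

lemma pathLengthToLE_bot (v : V) (t : ℕ) : (⊥ : SimpleGraph V).PathLengthToLE v t :=
  fun _ p hp => pathLengthLE_bot t p hp

section SupEdge

variable {u w : V}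

lemma Walk.edges_subset_edgeSet_of_sup_edge {a b : V} {p : (G ⊔ edge u w).Walk a b}
    (hp : s(u, w) ∉ p.edges) : ∀ e ∈ p.edges, e ∈ G.edgeSet := by
  intro e he
  rcases (edgeSet_sup G (edge u w) ▸ p.edges_subset_edgeSet he) with h | h
  · exact h
  · rw [Set.mem_singleton_iff.1 (edgeSet_edge_subset h)] at he
    exact absurd he hp

/-- `x, y` are `u, w` in the order in which `p` crosses the new edge; the support inclusions are
what carry the induction. -/
theorem Walk.IsPath.sup_edge_cases {a b : V} {p : (G ⊔ edge u w).Walk a b} (hp : p.IsPath) :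
    (∃ q : G.Walk a b, q.IsPath ∧ q.length = p.length ∧ q.support ⊆ p.support) ∨
    ∃ x y, s(x, y) = s(u, w) ∧ ∃ (q₁ : G.Walk a x) (q₂ : G.Walk y b),
      q₁.IsPath ∧ q₂.IsPath ∧ q₁.length + 1 + q₂.length = p.length ∧ q₁.support ⊆ p.support := by
  induction p with
  | nil => exact Or.inl ⟨.nil, .nil, rfl, List.Subset.refl _⟩
  | @cons a a' b h p ih =>
    rw [Walk.cons_isPath_iff] at hp
    by_cases hnew : s(a, a') = s(u, w)
    · have hG := edges_subset_edgeSet_of_sup_edge (p := p)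
        (hnew ▸ fun he => hp.2 (p.fst_mem_support_of_mem_edges he))
      refine Or.inr ⟨a, a', hnew, .nil, p.transfer G hG, .nil, hp.1.transfer hG, ?_, by simp⟩
      simp [Walk.length_transfer, add_comm]
    · have hadj : G.Adj a a' :=
        (h.resolve_right fun he => hnew ((adj_edge _ _).1 he).1.symm)
      refine (ih hp.1).imp ?_ ?_
      · rintro ⟨q, hq, hl, hs⟩
        exact ⟨.cons hadj q, hq.cons fun ha => hp.2 (hs ha), by simp [hl],
          List.cons_subset_cons _ hs⟩
      · rintro ⟨x, y, hxy, q₁, q₂, hq₁, hq₂, hl, hs⟩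
        exact ⟨x, y, hxy, .cons hadj q₁, q₂, hq₁.cons fun ha => hp.2 (hs ha), hq₂,
          by simp [← hl]; omega, List.cons_subset_cons _ hs⟩

lemma Reachable.of_sup_edge {a b : V} (h : (G ⊔ edge u w).Reachable a b) :
    G.Reachable a b ∨ ∃ x y, s(x, y) = s(u, w) ∧ G.Reachable a x ∧ G.Reachable y b := by
  classical
  obtain ⟨p⟩ := h
  exact (p.bypass_isPath.sup_edge_cases).imp (fun ⟨q, _⟩ => q.reachable)
    fun ⟨x, y, hxy, q₁, q₂, _⟩ => ⟨x, y, hxy, q₁.reachable, q₂.reachable⟩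

lemma pairwise_not_reachable_sup_edge {L : Set V}
    (hL : L.Pairwise fun v v' => ¬G.Reachable v v') (hu : u ∈ L) :
    (L \ {u}).Pairwise fun v v' => ¬(G ⊔ edge u w).Reachable v v' := by
  rintro v ⟨hv, hvu⟩ v' ⟨hv', hv'u⟩ hne hr
  rcases hr.of_sup_edge with hr | ⟨x, y, hxy, hx, hy⟩
  · exact hL hv hv' hne hr
  · rcases Sym2.eq_iff.1 hxy with ⟨rfl, -⟩ | ⟨-, rfl⟩
    · exact hL hv hu hvu hx
    · exact hL hu hv' (Ne.symm hv'u) hy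

lemma PathLengthToLE.sup_edge_of_not_reachable {v : V} {t : ℕ} (hv : G.PathLengthToLE v t)
    (hu : ¬G.Reachable u v) (hw : ¬G.Reachable w v) : (G ⊔ edge u w).PathLengthToLE v t := by
  intro a p hp
  rcases hp.sup_edge_cases with ⟨q, hq, hl, -⟩ | ⟨x, y, hxy, q₁, q₂, -, -, -, -⟩
  · exact hl ▸ hv q hq
  · rcases Sym2.eq_iff.1 hxy with ⟨-, rfl⟩ | ⟨-, rfl⟩
    · exact absurd q₂.reachable hw
    · exact absurd q₂.reachable hu

lemma PathLengthToLE.sup_edge {α β : ℕ} (hu : G.PathLengthToLE u α) (hw : G.PathLengthToLE w β)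
    (huw : ¬G.Reachable u w) : (G ⊔ edge u w).PathLengthToLE w (max β (α + 1)) := by
  intro a p hp
  rcases hp.sup_edge_cases with ⟨q, hq, hl, -⟩ | ⟨x, y, hxy, q₁, q₂, hq₁, hq₂, hl, -⟩
  · exact hl ▸ (hw q hq).trans (le_max_left _ _)
  · rcases Sym2.eq_iff.1 hxy with ⟨rfl, rfl⟩ | ⟨-, rfl⟩
    · have := hu q₁ hq₁
      have := Walk.length_eq_zero_iff.2 (Walk.isPath_iff_nil.1 hq₂)
      omega
    · exact absurd q₂.reachable huw

lemma PathLengthLE.sup_edge {α β γ : ℕ} (hG : G.PathLengthLE γ) (hu : G.PathLengthToLE u α)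
    (hw : G.PathLengthToLE w β) : (G ⊔ edge u w).PathLengthLE (max γ (α + 1 + β)) := by
  intro a b p hp
  rcases hp.sup_edge_cases with ⟨q, hq, hl, -⟩ | ⟨x, y, hxy, q₁, q₂, hq₁, hq₂, hl, -⟩
  · exact hl ▸ (hG q hq).trans (le_max_left _ _)
  · rcases Sym2.eq_iff.1 hxy with ⟨rfl, rfl⟩ | ⟨rfl, rfl⟩
    · have := hu q₁ hq₁
      have := hw q₂.reverse hq₂.reverse
      simp only [Walk.length_reverse] at this
      omega
    · have := hw q₁ hq₁
      have := hu q₂.reverse hq₂.reverse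
      simp only [Walk.length_reverse] at this
      omega

end SupEdge

end SimpleGraph

namespace PathGame

open SimpleGraph

section Phase

variable {V : Type*} [DecidableEq V] {G : SimpleGraph V} {k : ℕ} {A B : Finset V}

structure IsPhase (G : SimpleGraph V) (k : ℕ) (A B : Finset V) : Prop where
  disjoint : Disjoint A B
  pathsToA : ∀ v ∈ A, G.PathLengthToLE v k
  pathsToB : ∀ v ∈ B, G.PathLengthToLE v (k + 1)
  paths : G.PathLengthLE (2 * k + 2)
  paths_of_B_eq_empty : B = ∅ → G.PathLengthLE (2 * k + 1)
  pairwise : (↑(A ∪ B) : Set V).Pairwise fun v v' => ¬G.Reachable v v'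

lemma IsPhase.bot (A : Finset V) : IsPhase (⊥ : SimpleGraph V) 0 A ∅ where
  disjoint := disjoint_empty_right A
  pathsToA v _ := pathLengthToLE_bot v 0
  pathsToB v hv := absurd hv (notMem_empty v)
  paths := pathLengthLE_bot _
  paths_of_B_eq_empty _ := pathLengthLE_bot _
  pairwise _ _ _ _ hne := reachable_bot.not.2 hne

lemma IsPhase.next (h : IsPhase G k A B) : IsPhase G (k + 1) B ∅ where
  disjoint := disjoint_empty_right B
  pathsToA := h.pathsToB
  pathsToB v hv := absurd hv (notMem_empty v)
  paths := h.paths.mono (by omega)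
  paths_of_B_eq_empty _ := h.paths.mono (by omega)
  pairwise := h.pairwise.mono (by simp)

lemma IsPhase.sup_edge (h : IsPhase G k A B) {S : Finset V} {u w : V} (huS : u ∈ S)
    (hSA : S ⊆ A) (hw : w ∈ A ∪ B) (huw : u ≠ w) :
    IsPhase (G ⊔ edge u w) k (A \ insert w S) (insert w B \ S) := by
  have huAB : u ∈ A ∪ B := mem_union_left _ (hSA huS)
  have hu := h.pathsToA u (hSA huS)
  have hw' : G.PathLengthToLE w (k + 1) := by
    rcases mem_union.1 hw with hwA | hwB
    · exact (h.pathsToA w hwA).mono (by omega)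
    · exact h.pathsToB w hwB
  have far : ∀ v ∈ A ∪ B, v ≠ u → v ≠ w → ¬G.Reachable u v ∧ ¬G.Reachable w v :=
    fun v hv hvu hvw => ⟨h.pairwise huAB hv (Ne.symm hvu), h.pairwise hw hv (Ne.symm hvw)⟩
  refine ⟨?_, ?_, ?_, ?_, ?_, ?_⟩
  · refine disjoint_left.2 fun v hvA hvB => ?_
    simp only [mem_sdiff, mem_insert, not_or] at hvA hvB
    exact disjoint_left.1 h.disjoint hvA.1 (hvB.1.resolve_left hvA.2.1)
  · intro v hv
    simp only [mem_sdiff, mem_insert, not_or] at hv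
    obtain ⟨hvA, hvw, hvS⟩ := hv
    obtain ⟨hu', hw''⟩ := far v (mem_union_left _ hvA) (fun h => hvS (h ▸ huS)) hvw
    exact (h.pathsToA v hvA).sup_edge_of_not_reachable hu' hw''
  · intro v hv
    simp only [mem_sdiff, mem_insert] at hv
    obtain ⟨hvB, hvS⟩ := hv
    by_cases hvw : v = w
    · subst hvw
      exact (PathLengthToLE.sup_edge hu hw' (h.pairwise huAB hw huw)).mono (by omega)
    · have hvB := hvB.resolve_left hvw
      obtain ⟨hu', hw''⟩ := far v (mem_union_right _ hvB) (fun h => hvS (h ▸ huS)) hvw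
      exact (h.pathsToB v hvB).sup_edge_of_not_reachable hu' hw''
  · exact (h.paths.sup_edge hu hw').mono (by omega)
  · intro hB'
    have hsub : insert w B ⊆ S := sdiff_eq_empty_iff_subset.1 hB'
    have hB : B = ∅ := disjoint_self.1 <| disjoint_of_subset_left
      ((subset_insert w B).trans (hsub.trans hSA)) h.disjoint
    exact ((h.paths_of_B_eq_empty hB).sup_edge hu
      (h.pathsToA w (hSA (hsub (mem_insert_self w B))))).mono (by omega)
  · refine (pairwise_not_reachable_sup_edge h.pairwise huAB).mono fun v hv => ?_
    simp only [coe_union, coe_sdiff, coe_insert, Set.mem_union, Set.mem_sdiff, Set.mem_insert_iff,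
      mem_coe, Set.mem_singleton_iff] at hv ⊢
    refine ⟨?_, fun hvu => ?_⟩
    · rcases hv with ⟨hvA, -⟩ | ⟨rfl | hvB, -⟩
      exacts [Or.inl hvA, mem_union.1 hw, Or.inr hvB]
    · subst hvu
      rcases hv with ⟨-, hv⟩ | ⟨-, hv⟩
      exacts [hv (Or.inr huS), hv huS]

end Phase

section Counting

variable {V : Type*} [DecidableEq V]

def incidentEdges (F : Finset (Sym2 V)) (S : Finset V) : Finset (Sym2 V) :=
  {e ∈ F | ∃ a ∈ S, a ∈ e}

lemma mem_incidentEdges {F : Finset (Sym2 V)} {S : Finset V} {e : Sym2 V} :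
    e ∈ incidentEdges F S ↔ e ∈ F ∧ ∃ a ∈ S, a ∈ e :=
  mem_filter

lemma incidentEdges_subset (F : Finset (Sym2 V)) (S : Finset V) : incidentEdges F S ⊆ F :=
  filter_subset _ _

@[simp]
lemma incidentEdges_empty (F : Finset (Sym2 V)) : incidentEdges F ∅ = ∅ := by
  simp [incidentEdges]

lemma card_incidentEdges_insert_le (F : Finset (Sym2 V)) (S : Finset V) (w : V) :
    #(incidentEdges F (insert w S)) ≤ #(incidentEdges F S) + #{e ∈ F | w ∈ e} := by
  refine (card_le_card fun e he => ?_).trans (card_union_le _ _)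
  simp only [mem_incidentEdges, mem_filter, mem_insert, exists_eq_or_imp, mem_union] at he ⊢
  rcases he with ⟨heF, hw | hS⟩
  exacts [Or.inr ⟨heF, hw⟩, Or.inl ⟨heF, hS⟩]

lemma card_filter_mem_le_degree [Fintype V] {G : SimpleGraph V} [DecidableRel G.Adj]
    {F : Finset (Sym2 V)} (hF : F ⊆ G.edgeFinset) (v : V) : #{e ∈ F | v ∈ e} ≤ G.degree v := by
  rw [← card_incidenceFinset_eq_degree, incidenceFinset_eq_filter]
  exact card_le_card (filter_subset_filter _ hF)

/-- `#F ≤ (#s).choose 2`, stated without division. -/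
lemma two_mul_card_add_card_le {s : Finset V} {F : Finset (Sym2 V)} (hF : F ⊆ s.sym2)
    (hdiag : ∀ e ∈ F, ¬e.IsDiag) : 2 * #F + #s ≤ #s * #s := by
  have hdisj : Disjoint F (s.image Sym2.diag) := disjoint_left.2 fun e he hd => by
    obtain ⟨a, -, rfl⟩ := mem_image.1 hd
    exact hdiag _ he (Sym2.diag_isDiag a)
  have hsub : F ∪ s.image Sym2.diag ⊆ s.sym2 := union_subset hF fun e he => by
    obtain ⟨a, ha, rfl⟩ := mem_image.1 he
    exact diag_mem_sym2_iff.2 ha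
  have hcard := card_le_card hsub
  rw [card_union_of_disjoint hdisj, card_image_of_injective _ Sym2.diag_injective, card_sym2,
    Nat.choose_two_right, Nat.add_sub_cancel] at hcard
  have := Nat.div_mul_le_self ((#s + 1) * #s) 2
  have : (#s + 1) * #s = #s * #s + #s := by ring
  omega

lemma exists_subset_forall_not_insert (A : Finset V) {P : Finset V → Prop} (h₀ : P ∅) :
    ∃ S ⊆ A, P S ∧ ∀ w ∈ A, w ∉ S → ¬P (insert w S) := by
  classical
  obtain ⟨S, hS, hmax⟩ := exists_max_image {T ∈ A.powerset | P T} card ⟨∅, by simp [h₀]⟩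
  simp only [mem_filter, mem_powerset] at hS hmax
  refine ⟨S, hS.1, hS.2, fun w hw hwS hP => ?_⟩
  have := hmax (insert w S) ⟨insert_subset hw hS.1, hP⟩
  rw [card_insert_of_notMem hwS] at this
  omega

end Counting

lemma mul_pow_two_pow_sub_one_le {D m b k N : ℕ} (hb : D * b ≤ m * m)
    (hm : m * D ^ (2 ^ k - 1) ≤ N ^ 2 ^ k) : b * D ^ (2 ^ (k + 1) - 1) ≤ N ^ 2 ^ (k + 1) := by
  have hexp : 2 ^ (k + 1) - 1 = (2 ^ k - 1) + (2 ^ k - 1) + 1 := by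
    have := Nat.one_le_two_pow (n := k)
    rw [pow_succ]
    omega
  calc b * D ^ (2 ^ (k + 1) - 1) = D * b * (D ^ (2 ^ k - 1) * D ^ (2 ^ k - 1)) := by
        rw [hexp, pow_add, pow_add, pow_one]; ring
    _ ≤ m * m * (D ^ (2 ^ k - 1) * D ^ (2 ^ k - 1)) := Nat.mul_le_mul_right _ hb
    _ = (m * D ^ (2 ^ k - 1)) * (m * D ^ (2 ^ k - 1)) := by ring
    _ ≤ N ^ 2 ^ k * N ^ 2 ^ k := Nat.mul_le_mul hm hm
    _ = N ^ 2 ^ (k + 1) := by rw [← pow_add, ← two_mul, pow_succ']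

section Board

variable {n : ℕ}

lemma clientGraph_empty : clientGraph (∅ : Finset (Sym2 (Fin n))) = ⊥ := by
  rw [clientGraph, coe_empty, fromEdgeSet_empty]

lemma clientGraph_insert (C : Finset (Sym2 (Fin n))) (u w : Fin n) :
    clientGraph (insert s(u, w) C) = clientGraph C ⊔ edge u w := by
  rw [clientGraph, clientGraph, edge, coe_insert, Set.insert_eq, fromEdgeSet_union, sup_comm]

lemma not_isDiag_of_mem_Kboard {e : Sym2 (Fin n)} (he : e ∈ Kboard n) : ¬e.IsDiag :=
  not_isDiag_of_mem_edgeSet _ (mem_edgeFinset.1 he)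

lemma card_filter_mem_le_of_subset_Kboard {F : Finset (Sym2 (Fin n))} (hF : F ⊆ Kboard n)
    (v : Fin n) : #{e ∈ F | v ∈ e} ≤ n - 1 := by
  simpa [complete_graph_degree] using card_filter_mem_le_degree hF v

end Board

variable {n q k m : ℕ} {C F : Finset (Sym2 (Fin n))} {A B : Finset (Fin n)}

/-- `m` bounds the number of live vertices at the start of phase `k`. -/
structure Stage (q : ℕ) (C F : Finset (Sym2 (Fin n))) (k : ℕ) (A B : Finset (Fin n)) (m : ℕ) :
    Prop where
  isPhase : IsPhase (clientGraph C) k A B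
  subset_Kboard : F ⊆ Kboard n
  subset_sym2 : F ⊆ (A ∪ B).sym2
  potential : (q + 1) * #B + 2 * #F + m ≤ m * m
  growth : m * (q + 1) ^ (2 ^ k - 1) ≤ n ^ 2 ^ k
  one_le : 1 ≤ m

def Invariant (q : ℕ) (C F : Finset (Sym2 (Fin n))) : Prop :=
  ∃ k A B m, Stage q C F k A B m

lemma Stage.init (hn : 1 ≤ n) : Stage q ∅ (Kboard n) 0 univ ∅ n where
  isPhase := clientGraph_empty ▸ IsPhase.bot univ
  subset_Kboard := subset_rfl
  subset_sym2 _ _ := mem_sym2_iff.2 fun _ _ => by simp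
  potential := by
    have := two_mul_card_add_card_le (s := univ) (F := Kboard n)
      (fun _ _ => mem_sym2_iff.2 fun _ _ => mem_univ _) fun _ => not_isDiag_of_mem_Kboard
    simpa using this
  growth := by simp
  one_le := hn

lemma Stage.next (h : Stage q C F k A B m) (hF : F ⊆ B.sym2) (hB : B.Nonempty) :
    Stage q C F (k + 1) B ∅ #B where
  isPhase := h.isPhase.next
  subset_Kboard := h.subset_Kboard
  subset_sym2 := by rwa [union_empty]
  potential := by
    have := two_mul_card_add_card_le hF fun _ he => not_isDiag_of_mem_Kboard (h.subset_Kboard he)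
    simpa using this
  growth := mul_pow_two_pow_sub_one_le (by have := h.potential; nlinarith) h.growth
  one_le := card_pos.2 hB

lemma Stage.insert_edge (h : Stage q C F k A B m) {S : Finset (Fin n)} {u w : Fin n}
    (hSA : S ⊆ A) (huS : u ∈ S) (hx : s(u, w) ∈ F)
    (hgain : w ∈ A → w ∉ S → q + 1 ≤ 2 * #(incidentEdges F S)) :
    Stage q (insert s(u, w) C) (F \ incidentEdges F S) k (A \ insert w S) (insert w B \ S) m := by
  have hw : w ∈ A ∪ B := mem_sym2_iff.1 (h.subset_sym2 hx) w (Sym2.mem_mk_right u w)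
  have huw : u ≠ w := fun huw =>
    not_isDiag_of_mem_Kboard (h.subset_Kboard hx) (Sym2.mk_isDiag_iff.2 huw)
  refine ⟨?_, sdiff_subset.trans h.subset_Kboard, ?_, ?_, h.growth, h.one_le⟩
  · rw [clientGraph_insert]
    exact h.isPhase.sup_edge huS hSA hw huw
  · intro e he
    rw [mem_sdiff] at he
    refine mem_sym2_iff.2 fun v hv => ?_
    have hvAB := mem_sym2_iff.1 (h.subset_sym2 he.1) v hv
    have hvS : v ∉ S := fun hvS => he.2 (mem_incidentEdges.2 ⟨he.1, v, hvS, hv⟩)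
    simp only [mem_union, mem_sdiff, mem_insert] at hvAB ⊢
    tauto
  · have hB : (q + 1) * #(insert w B \ S) ≤ (q + 1) * #B + 2 * #(incidentEdges F S) := by
      by_cases hold : w ∈ B ∨ w ∈ S
      · have : insert w B \ S ⊆ B := fun v hv => by
          simp only [mem_sdiff, mem_insert] at hv
          rcases hv with ⟨rfl | hvB, hvS⟩
          exacts [hold.resolve_right hvS, hvB]
        have := card_le_card this
        nlinarith
      · push Not at hold
        have := hgain ((mem_union.1 hw).resolve_right hold.1) hold.2
        have : #(insert w B \ S) ≤ #B + 1 := (card_le_card sdiff_subset).trans (card_insert_le _ _)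
        nlinarith
    have := card_sdiff_add_card_eq_card (incidentEdges_subset F S)
    have := h.potential
    linarith

lemma Stage.step (h : Stage q C F k A B m) (hq : 2 * n ≤ q)
    (htouch : ∃ e ∈ F, ∃ a ∈ A, a ∈ e) :
    ∃ O ⊆ F, O.Nonempty ∧ #O ≤ q + 1 ∧ ∀ x ∈ O, Invariant q (insert x C) (F \ O) := by
  obtain ⟨S, hSA, hS, hmax⟩ := exists_subset_forall_not_insert A
    (P := fun S => #(incidentEdges F S) ≤ q + 1) (by simp)
  have hgain : ∀ w ∈ A, w ∉ S → q + 1 < #(incidentEdges F S) + (n - 1) := fun w hw hwS =>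
    (not_le.1 (hmax w hw hwS)).trans_le <| (card_incidentEdges_insert_le F S w).trans <|
      Nat.add_le_add_left (card_filter_mem_le_of_subset_Kboard h.subset_Kboard w) _
  refine ⟨incidentEdges F S, incidentEdges_subset F S, ?_, hS, fun x hx => ?_⟩
  · obtain ⟨e, he, a, ha, hae⟩ := htouch
    by_cases haS : a ∈ S
    · exact ⟨e, mem_incidentEdges.2 ⟨he, a, haS, hae⟩⟩
    · refine nonempty_iff_ne_empty.2 fun hO => ?_
      have := hgain a ha haS
      rw [hO, card_empty] at this
      omega
  · obtain ⟨hxF, u, huS, hux⟩ := mem_incidentEdges.1 hx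
    obtain ⟨w, rfl⟩ := Sym2.mem_iff_exists.1 hux
    exact ⟨k, _, _, m, h.insert_edge hSA huS hxF fun hw hwS => by
      have := hgain w hw hwS
      omega⟩

lemma Invariant.init (hn : 1 ≤ n) : Invariant q ∅ (Kboard n) :=
  ⟨_, _, _, _, Stage.init hn⟩

lemma Invariant.step (h : Invariant q C F) (hq : 2 * n ≤ q) (hF : F.Nonempty) :
    ∃ O ⊆ F, O.Nonempty ∧ #O ≤ q + 1 ∧ ∀ x ∈ O, Invariant q (insert x C) (F \ O) := by
  obtain ⟨k, A, B, m, h⟩ := h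
  by_cases htouch : ∃ e ∈ F, ∃ a ∈ A, a ∈ e
  · exact h.step hq htouch
  · push Not at htouch
    have hFB : F ⊆ B.sym2 := fun e he => mem_sym2_iff.2 fun v hv =>
      (mem_union.1 (mem_sym2_iff.1 (h.subset_sym2 he) v hv)).resolve_left fun hvA =>
        htouch e he v hvA hv
    obtain ⟨e, he⟩ := hF
    have haB : e.out.1 ∈ B := mem_sym2_iff.1 (hFB he) _ (Sym2.out_fst_mem e)
    exact (h.next hFB ⟨_, haB⟩).step hq ⟨e, he, _, haB, Sym2.out_fst_mem e⟩

lemma Invariant.final (h : Invariant q C ∅) :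
    ∃ k, (clientGraph C).PathLengthLE (2 * k + 1) ∧ (q + 1) ^ (2 ^ k - 1) ≤ n ^ 2 ^ k := by
  obtain ⟨k, A, B, m, h⟩ := h
  obtain ⟨k, A, m, h⟩ : ∃ k A m, Stage q C ∅ k A ∅ m := by
    rcases B.eq_empty_or_nonempty with rfl | hB
    · exact ⟨k, A, m, h⟩
    · exact ⟨k + 1, B, #B, h.next (empty_subset _) hB⟩
  exact ⟨k, h.isPhase.paths_of_B_eq_empty rfl,
    (Nat.le_mul_of_pos_left _ h.one_le).trans h.growth⟩

lemma pow_sub_one_le_of_pow_le {c n E : ℕ} (hn : 1 ≤ n) (hE : 1 ≤ E)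
    (h : (c * n + 1) ^ (E - 1) ≤ n ^ E) : c ^ (E - 1) ≤ n := by
  have : c ^ (E - 1) * n ^ (E - 1) ≤ n * n ^ (E - 1) :=
    calc c ^ (E - 1) * n ^ (E - 1) = (c * n) ^ (E - 1) := (mul_pow _ _ _).symm
      _ ≤ (c * n + 1) ^ (E - 1) := Nat.pow_le_pow_left (Nat.le_succ _) _
      _ ≤ n ^ E := h
      _ = n * n ^ (E - 1) := by rw [← pow_succ', Nat.sub_add_cancel hE]
  exact Nat.le_of_mul_le_mul_right this (by positivity)

lemma lt_logb_logb_of_pow_le {c n k : ℕ} (hc : 2 ≤ c) (hn : 1 ≤ n)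
    (h : (c * n + 1) ^ (2 ^ k - 1) ≤ n ^ 2 ^ k) :
    (k : ℝ) < Real.logb 2 (Real.logb (2 * (c : ℝ) / 3) ((c : ℝ) * (n : ℝ))) := by
  have hE : 1 ≤ 2 ^ k := Nat.one_le_two_pow
  have hcn : (c : ℝ) ^ (2 ^ k - 1) ≤ n := by exact_mod_cast pow_sub_one_le_of_pow_le hn hE h
  have hc' : (2 : ℝ) ≤ c := by exact_mod_cast hc
  have hn' : (1 : ℝ) ≤ n := by exact_mod_cast hn
  have hpow : (2 * (c : ℝ) / 3) ^ 2 ^ k < (c : ℝ) * n :=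
    calc (2 * (c : ℝ) / 3) ^ 2 ^ k = (2 / 3 : ℝ) ^ 2 ^ k * ((c : ℝ) * (c : ℝ) ^ (2 ^ k - 1)) := by
          rw [← pow_succ', Nat.sub_add_cancel hE, ← mul_pow]; ring
      _ ≤ 2 / 3 * ((c : ℝ) * n) := by
          gcongr
          exact pow_le_of_le_one (by norm_num) (by norm_num) (by positivity)
      _ < (c : ℝ) * n := by nlinarith
  have hlog : ((2 ^ k : ℕ) : ℝ) < Real.logb (2 * (c : ℝ) / 3) (c * n) := by
    rw [Real.lt_logb_iff_rpow_lt (by linarith) (by positivity), Real.rpow_natCast]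
    exact hpow
  rw [Real.lt_logb_iff_rpow_lt one_lt_two (lt_of_le_of_lt (by positivity) hlog),
    Real.rpow_natCast]
  exact_mod_cast hlog

end PathGame

/-- Proposition: for all integers `n ≥ 1` and `c ≥ 2`, with `q = c n`,
`P(n,q) < 2 log₂(log_{2c/3} q) + 1`: Waiter can ensure that Client's final graph contains
no path with at least `2 log₂(log_{2c/3}(q)) + 1` edges. -/
theorem stmt14 (n c : ℕ) (hn : 1 ≤ n) (hc : 2 ≤ c) :
    WaiterCanForce (Kboard n) (c * n)
      (fun C => ∀ (u v : Fin n) (p : (clientGraph C).Walk u v), p.IsPath →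
        (p.length : ℝ) <
          2 * Real.logb 2 (Real.logb (2 * (c : ℝ) / 3) ((c : ℝ) * (n : ℝ))) + 1) := by
  refine waiterCanForce_of_invariant (PathGame.Invariant (c * n)) (PathGame.Invariant.init hn)
    (fun C F h hF => h.step (Nat.mul_le_mul_right n hc) hF) fun C h u v p hp => ?_
  obtain ⟨k, hpaths, hgrowth⟩ := h.final
  have hk := PathGame.lt_logb_logb_of_pow_le hc hn hgrowth
  have hp : (p.length : ℝ) ≤ 2 * k + 1 := by exact_mod_cast hpaths p hp
  linarith
end

section
/- Let G and H be graphs, H having at least one edge, such that ⌈ar(G)/2⌉ < ar(H), where ar denotes arboricity. Then Waiter has a winning strategy in the H-game CW(G, H, 1), i.e., Waiter can guarantee that at the end of the game Client's graph contains no copy of H. -/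
open Finset

variable {α : Type*}

/-!
Let `k = ⌈ar(G)/2⌉`. Waiter maintains, for every vertex set `S` with `|S| ≥ 2`, the invariant
`2 e_C(S) + e_F(S) ≤ 2k(|S| - 1)`, where `C` are Client's edges and `F` the free ones; it holds
initially because `e_G(S) ≤ ar(G)(|S| - 1)`. Call `S` tight if equality holds. By
supermodularity of `S ↦ e(S)`, tight sets spanning a common free edge are closed under
intersection, so a minimal tight set `T` spanning a free edge lies in every tight set that
shares a free edge with it, and by parity it spans two free edges. Offering those two edges
(or any single free edge if no tight set spans one) preserves the invariant. At the end
`e_C(S) ≤ k(|S| - 1)` for all `S`, whereas `ar(H) > k` yields a subgraph of `H` violating this.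
-/

namespace ClientWaiter

lemma two_le_card_of_mem_sym2 {V : Type*} {e : Sym2 V} {S : Finset V} (he : e ∈ S.sym2)
    (hd : ¬ e.IsDiag) : 2 ≤ #S := by
  induction e using Sym2.ind with
  | _ a b =>
    rw [mem_sym2_iff] at he
    exact one_lt_card.2 ⟨a, he a (Sym2.mem_mk_left a b), b, he b (Sym2.mem_mk_right a b),
      by simpa using hd⟩

section

variable {V : Type*} [DecidableEq V]

def edgeCount (E : Finset (Sym2 V)) (S : Finset V) : ℕ := #{e ∈ E | e ∈ S.sym2}

lemma edgeCount_add_edgeCount_le (E : Finset (Sym2 V)) (S T : Finset V) :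
    edgeCount E S + edgeCount E T ≤ edgeCount E (S ∩ T) + edgeCount E (S ∪ T) := by
  have hinter :
      {e ∈ E | e ∈ S.sym2} ∩ {e ∈ E | e ∈ T.sym2} = {e ∈ E | e ∈ (S ∩ T).sym2} := by
    ext e
    simp only [mem_inter, mem_filter, mem_sym2_iff]
    grind
  have hunion :
      {e ∈ E | e ∈ S.sym2} ∪ {e ∈ E | e ∈ T.sym2} ⊆ {e ∈ E | e ∈ (S ∪ T).sym2} := by
    intro e
    simp only [mem_union, mem_filter]
    rintro (⟨he, hS⟩ | ⟨he, hT⟩)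
    exacts [⟨he, sym2_mono subset_union_left hS⟩, ⟨he, sym2_mono subset_union_right hT⟩]
  have := card_le_card hunion
  have := card_union_add_card_inter {e ∈ E | e ∈ S.sym2} {e ∈ E | e ∈ T.sym2}
  rw [hinter] at this
  unfold edgeCount
  omega

lemma edgeCount_insert_le (e : Sym2 V) (C : Finset (Sym2 V)) (S : Finset V) :
    edgeCount (insert e C) S ≤ edgeCount C S + 1 := by
  unfold edgeCount
  rw [filter_insert]
  split_ifs
  exacts [card_insert_le _ _, Nat.le_succ _]

lemma edgeCount_insert_of_notMem {e : Sym2 V} {S : Finset V} (he : e ∉ S.sym2)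
    (C : Finset (Sym2 V)) : edgeCount (insert e C) S = edgeCount C S := by
  rw [edgeCount, filter_insert, if_neg he, edgeCount]

lemma edgeCount_sdiff_add_edgeCount {O F : Finset (Sym2 V)} (hOF : O ⊆ F) (S : Finset V) :
    edgeCount (F \ O) S + edgeCount O S = edgeCount F S := by
  have hsub : {e ∈ O | e ∈ S.sym2} ⊆ {e ∈ F | e ∈ S.sym2} := filter_subset_filter _ hOF
  have hsdiff :
      {e ∈ F \ O | e ∈ S.sym2} = {e ∈ F | e ∈ S.sym2} \ {e ∈ O | e ∈ S.sym2} := by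
    ext e
    simp only [mem_filter, mem_sdiff]
    tauto
  unfold edgeCount
  rw [hsdiff, card_sdiff_of_subset hsub, Nat.sub_add_cancel (card_le_card hsub)]

variable {k : ℕ} {C F : Finset (Sym2 V)}

/-- Client's graph `C` has arboricity at most `k`. -/
def IsSparse (k : ℕ) (C : Finset (Sym2 V)) : Prop :=
  ∀ S : Finset V, 2 ≤ #S → edgeCount C S ≤ k * (#S - 1)

/-- Waiter's invariant: Client's edges weigh two and free edges one. -/
def PotentialBound (k : ℕ) (C F : Finset (Sym2 V)) : Prop :=
  ∀ S : Finset V, 2 ≤ #S → 2 * edgeCount C S + edgeCount F S ≤ 2 * (k * (#S - 1))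

def IsTight (k : ℕ) (C F : Finset (Sym2 V)) (S : Finset V) : Prop :=
  2 ≤ #S ∧ 2 * edgeCount C S + edgeCount F S = 2 * (k * (#S - 1))

/-- Offering `{e, y}` keeps the invariant when Client takes `e`; `y = e` encodes the offer
`{e}`. -/
def SafeOffer (k : ℕ) (C F : Finset (Sym2 V)) (e y : Sym2 V) : Prop :=
  ∀ S : Finset V, IsTight k C F S → e ∈ S.sym2 → y ∈ S.sym2 ∧ y ≠ e

lemma PotentialBound.isSparse (h : PotentialBound k C ∅) : IsSparse k C := fun S hS => by
  have h0 : edgeCount (∅ : Finset (Sym2 V)) S = 0 := by rw [edgeCount, filter_empty, card_empty]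
  have := h S hS
  omega

lemma PotentialBound.insert_sdiff {e y : Sym2 V} (hI : PotentialBound k C F) (he : e ∈ F)
    (hy : y ∈ F) (hsafe : SafeOffer k C F e y) :
    PotentialBound k (insert e C) (F \ {e, y}) := by
  intro S hS
  have hsplit := edgeCount_sdiff_add_edgeCount (insert_subset he (singleton_subset_iff.2 hy)) S
  have hbound := hI S hS
  by_cases heS : e ∈ S.sym2
  · have hC := edgeCount_insert_le e C S
    have hO : 1 ≤ edgeCount {e, y} S :=
      card_pos.2 ⟨e, mem_filter.2 ⟨mem_insert_self _ _, heS⟩⟩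
    by_cases htight : IsTight k C F S
    · -- the tight sets through `e` lose both offered edges
      obtain ⟨hyS, hye⟩ := hsafe S htight heS
      have hO2 : 2 ≤ edgeCount {e, y} S := by
        have hpair : ∀ x ∈ ({e, y} : Finset (Sym2 V)), x ∈ S.sym2 := by
          simp only [mem_insert, mem_singleton]
          rintro x (rfl | rfl) <;> assumption
        rw [edgeCount, filter_true_of_mem hpair, card_pair hye.symm]
      have := htight.2
      omega
    · have hslack : 2 * edgeCount C S + edgeCount F S ≠ 2 * (k * (#S - 1)) :=
        fun h => htight ⟨hS, h⟩
      omega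
  · rw [edgeCount_insert_of_notMem heS]
    omega

lemma IsTight.inter (hI : PotentialBound k C F) {S T : Finset V} (hS : IsTight k C F S)
    (hT : IsTight k C F T) (hST : 2 ≤ #(S ∩ T)) : IsTight k C F (S ∩ T) := by
  obtain ⟨hS2, hSt⟩ := hS
  obtain ⟨hT2, hTt⟩ := hT
  have hC := edgeCount_add_edgeCount_le C S T
  have hF := edgeCount_add_edgeCount_le F S T
  have hinter := hI _ hST
  have hunion := hI (S ∪ T) (hS2.trans (card_le_card subset_union_left))
  have hmod : k * (#S - 1) + k * (#T - 1) = k * (#(S ∩ T) - 1) + k * (#(S ∪ T) - 1) := by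
    rw [← Nat.mul_add, ← Nat.mul_add]
    have := card_inter_add_card_union S T
    have := card_le_card (inter_subset_right : S ∩ T ⊆ T)
    congr 1
    omega
  exact ⟨hST, by omega⟩

lemma exists_safeOffer (hI : PotentialBound k C F) (hloop : ∀ e ∈ F, ¬ e.IsDiag)
    (hF : F.Nonempty) :
    ∃ e ∈ F, ∃ y ∈ F, SafeOffer k C F e y ∧ SafeOffer k C F y e := by
  by_cases hfree : ∃ S, IsTight k C F S ∧ ∃ e ∈ F, e ∈ S.sym2
  · -- a tight set `T` that is minimal among those spanning a free edge lies inside every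
    -- tight set sharing a free edge with it, and spans two free edges by parity
    obtain ⟨T, ⟨hT, u, huF, huT⟩, hmin⟩ := wellFounded_lt.has_min _ hfree
    have hsub :
        ∀ e ∈ F, e ∈ T.sym2 → ∀ S, IsTight k C F S → e ∈ S.sym2 → T ⊆ S := by
      intro e heF heT S hS heS
      have heST : e ∈ (S ∩ T).sym2 := by
        rw [mem_sym2_iff] at heS heT ⊢
        exact fun a ha => mem_inter.2 ⟨heS a ha, heT a ha⟩
      have hST := hS.inter hI hT (two_le_card_of_mem_sym2 heST (hloop e heF))
      have : S ∩ T = T := eq_of_le_of_not_lt inter_subset_right (hmin _ ⟨hST, e, heF, heST⟩)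
      exact this ▸ inter_subset_left
    have hpos : 0 < edgeCount F T := card_pos.2 ⟨u, mem_filter.2 ⟨huF, huT⟩⟩
    have htwo : 1 < edgeCount F T := by
      have := hT.2
      omega
    obtain ⟨e, he, y, hy, hey⟩ := one_lt_card.1 htwo
    rw [mem_filter] at he hy
    refine ⟨e, he.1, y, hy.1, fun S hS heS => ⟨sym2_mono ?_ hy.2, Ne.symm hey⟩,
      fun S hS hyS => ⟨sym2_mono ?_ he.2, hey⟩⟩
    exacts [hsub e he.1 he.2 S hS heS, hsub y hy.1 hy.2 S hS hyS]
  · obtain ⟨e, he⟩ := hF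
    have hsafe : SafeOffer k C F e e := fun S hS heS => absurd ⟨S, hS, e, he, heS⟩ hfree
    exact ⟨e, he, e, he, hsafe, hsafe⟩

lemma waiterCanAux_of_potentialBound {P : Finset (Sym2 V) → Prop}
    (hP : ∀ C, IsSparse k C → P C) (n : ℕ) (C F : Finset (Sym2 V)) (hn : #F ≤ n)
    (hloop : ∀ e ∈ F, ¬ e.IsDiag) (hI : PotentialBound k C F) : WaiterCanAux 1 P n C F := by
  induction n generalizing C F with
  | zero =>
    obtain rfl := card_eq_zero.1 (Nat.le_zero.1 hn)
    exact ⟨rfl, hP C hI.isSparse⟩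
  | succ n ih =>
    rw [WaiterCanAux]
    split_ifs with hF
    · exact hP C (hF ▸ hI).isSparse
    obtain ⟨e, he, y, hy, hey, hye⟩ := exists_safeOffer hI hloop (nonempty_iff_ne_empty.2 hF)
    have hOF : {e, y} ⊆ F := insert_subset he (singleton_subset_iff.2 hy)
    have hn' : #(F \ {e, y}) ≤ n := by
      have := card_pos.2 (insert_nonempty e {y})
      rw [card_sdiff_of_subset hOF]
      omega
    have hloop' : ∀ x ∈ F \ {e, y}, ¬ x.IsDiag := fun x hx => hloop x (mem_sdiff.1 hx).1
    refine ⟨{e, y}, hOF, insert_nonempty e {y}, card_le_two, ?_⟩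
    simp only [mem_insert, mem_singleton, forall_eq_or_imp, forall_eq]
    refine ⟨ih _ _ hn' hloop' (hI.insert_sdiff he hy hey), ?_⟩
    rw [pair_comm]
    exact ih _ _ (pair_comm e y ▸ hn') (pair_comm e y ▸ hloop') (hI.insert_sdiff hy he hye)

end

lemma arboricity_nonneg {β : Type*} (G : SimpleGraph β) : 0 ≤ arboricity G := by
  refine Real.sSup_nonneg ?_
  rintro x ⟨G', h2, rfl⟩
  have : (2 : ℝ) ≤ G'.verts.ncard := by exact_mod_cast h2
  exact div_nonneg (Nat.cast_nonneg _) (by linarith)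

lemma edgeCount_edgeFinset_le {V : Type*} [Fintype V] [DecidableEq V] (G : SimpleGraph V)
    [DecidableRel G.Adj] {S : Finset V} (hS : 2 ≤ #S) :
    (edgeCount G.edgeFinset S : ℝ) ≤ arboricity G * (#S - 1) := by
  set G' : G.Subgraph := (⊤ : G.Subgraph).induce S
  have hverts : G'.verts.ncard = #S := Set.ncard_coe_finset S
  have hedges : G'.edgeSet = ↑{e ∈ G.edgeFinset | e ∈ S.sym2} := by
    ext e
    induction e using Sym2.ind with
    | _ a b => simp [G', mem_sym2_iff, and_comm, and_assoc]
  have hbdd : BddAbove {x : ℝ | ∃ G' : G.Subgraph, 2 ≤ G'.verts.ncard ∧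
      x = (G'.edgeSet.ncard : ℝ) / ((G'.verts.ncard : ℝ) - 1)} := by
    refine ⟨G.edgeSet.ncard, ?_⟩
    rintro x ⟨G', h2, rfl⟩
    have : (2 : ℝ) ≤ G'.verts.ncard := by exact_mod_cast h2
    calc (G'.edgeSet.ncard : ℝ) / ((G'.verts.ncard : ℝ) - 1) ≤ G'.edgeSet.ncard :=
          div_le_self (Nat.cast_nonneg _) (by linarith)
      _ ≤ G.edgeSet.ncard := by exact_mod_cast Set.ncard_le_ncard G'.edgeSet_subset
  have hle := le_csSup hbdd ⟨G', hverts ▸ hS, rfl⟩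
  rw [hverts, hedges, Set.ncard_coe_finset] at hle
  have : (2 : ℝ) ≤ #S := by exact_mod_cast hS
  exact (div_le_iff₀ (by linarith)).1 hle

lemma potentialBound_edgeFinset {V : Type*} [Fintype V] [DecidableEq V] (G : SimpleGraph V)
    [DecidableRel G.Adj] {k : ℕ} (hk : arboricity G ≤ 2 * k) :
    PotentialBound k ∅ G.edgeFinset := by
  intro S hS
  have hS' : (2 : ℝ) ≤ #S := by exact_mod_cast hS
  have hreal := (edgeCount_edgeFinset_le G hS).trans
    (mul_le_mul_of_nonneg_right hk (by linarith))
  have h0 : edgeCount (∅ : Finset (Sym2 V)) S = 0 := by rw [edgeCount, filter_empty, card_empty]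
  rw [h0, mul_zero, zero_add]
  exact_mod_cast (by push_cast [Nat.cast_sub (by omega : 1 ≤ #S)]; linarith :
    (edgeCount G.edgeFinset S : ℝ) ≤ ((2 * (k * (#S - 1)) : ℕ) : ℝ))

lemma exists_subgraph_of_lt_arboricity {β : Type*} {H : SimpleGraph β} {k : ℕ}
    (hk : (k : ℝ) < arboricity H) :
    ∃ H' : H.Subgraph, 2 ≤ H'.verts.ncard ∧ k * (H'.verts.ncard - 1) < H'.edgeSet.ncard := by
  have hne : {x : ℝ | ∃ H' : H.Subgraph, 2 ≤ H'.verts.ncard ∧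
      x = (H'.edgeSet.ncard : ℝ) / ((H'.verts.ncard : ℝ) - 1)}.Nonempty := by
    by_contra hemp
    rw [Set.not_nonempty_iff_eq_empty] at hemp
    rw [arboricity, hemp, Real.sSup_empty] at hk
    exact (Nat.cast_nonneg k).not_gt hk
  obtain ⟨_, ⟨H', h2, rfl⟩, hlt⟩ := exists_lt_of_lt_csSup hne hk
  have : (2 : ℝ) ≤ H'.verts.ncard := by exact_mod_cast h2
  refine ⟨H', h2, ?_⟩
  have := (lt_div_iff₀ (by linarith)).1 hlt
  exact_mod_cast (by push_cast [Nat.cast_sub (by omega : 1 ≤ H'.verts.ncard)]; linarith :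
    ((k * (H'.verts.ncard - 1) : ℕ) : ℝ) < H'.edgeSet.ncard)

lemma IsSparse.not_containsCopy {V : Type*} [DecidableEq V] {k : ℕ} {C : Finset (Sym2 V)}
    (hC : IsSparse k C) {β : Type*} {H : SimpleGraph β} (hk : (k : ℝ) < arboricity H) :
    ¬ ContainsCopy H (clientGraph C) := by
  rintro ⟨f, hf, hadj⟩
  obtain ⟨H', h2, hlt⟩ := exists_subgraph_of_lt_arboricity hk
  have hfin : H'.verts.Finite := Set.finite_of_ncard_pos (by omega)
  set S := hfin.toFinset.image f
  have hS : #S = H'.verts.ncard := by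
    rw [card_image_of_injective _ hf, Set.ncard_eq_toFinset_card _ hfin]
  have hle : H'.edgeSet.ncard ≤ edgeCount C S := by
    rw [edgeCount, ← Set.ncard_coe_finset]
    refine Set.ncard_le_ncard_of_injOn (Sym2.map f) ?_ (Sym2.map.injective hf).injOn
    intro e he
    induction e using Sym2.ind with
    | _ a b =>
      have hab := hadj (H'.adj_sub he)
      simp only [clientGraph, SimpleGraph.fromEdgeSet_adj, mem_coe] at hab
      rw [Sym2.map_mk, mem_coe, mem_filter, mk_mem_sym2_iff]
      exact ⟨hab.1, mem_image_of_mem f (hfin.mem_toFinset.2 (H'.edge_vert he)),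
        mem_image_of_mem f (hfin.mem_toFinset.2 (H'.edge_vert he.symm))⟩
  have := hC S (hS ▸ h2)
  rw [hS] at this
  omega

end ClientWaiter

theorem stmt17_general {β V : Type*} [Fintype V] [DecidableEq V]
    (H : SimpleGraph β) (G : SimpleGraph V) [DecidableRel G.Adj]
    (har : (⌈arboricity G / 2⌉ : ℝ) < arboricity H) :
    WaiterCanForce G.edgeFinset 1 (fun C => ¬ ContainsCopy H (clientGraph C)) := by
  set k := ⌈arboricity G / 2⌉₊
  have hk : (k : ℝ) = ⌈arboricity G / 2⌉ :=
    natCast_ceil_eq_intCast_ceil (div_nonneg (ClientWaiter.arboricity_nonneg G) zero_le_two)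
  have hGk : arboricity G ≤ 2 * k := by linarith [Nat.le_ceil (arboricity G / 2)]
  exact ClientWaiter.waiterCanAux_of_potentialBound
    (fun C hC => hC.not_containsCopy (hk ▸ har)) _ _ _ le_rfl
    (fun e he => G.not_isDiag_of_mem_edgeSet (SimpleGraph.mem_edgeFinset.1 he))
    (ClientWaiter.potentialBound_edgeFinset G hGk)

/-- Lemma 8: if `⌈ar(G)/2⌉ < ar(H)` then Waiter has a winning strategy for the
`CW(G, H, 1)` game. -/
theorem stmt17 {β V : Type*} [Fintype β] [Fintype V] [DecidableEq V]
    (H : SimpleGraph β) (G : SimpleGraph V) [DecidableRel G.Adj]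
    (hH : H.edgeSet.Nonempty)
    (har : (⌈arboricity G / 2⌉ : ℝ) < arboricity H) :
    WaiterCanForce G.edgeFinset 1 (fun C => ¬ ContainsCopy H (clientGraph C)) :=
  stmt17_general H G har
end
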